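/- For r in (0,1), K(r) = π/(2·AG(1, √(1−r²))), where AG denotes the arithmetic-geometric mean. -/

import Mathlib

noncomputable def ellK (r : ℝ) : ℝ :=
  ∫ θ in (0:ℝ)..(Real.pi/2), 1 / Real.sqrt (1 - r^2 * Real.sin θ ^ 2)

noncomputable def agmSeq (x y : ℝ) : ℕ → ℝ × ℝ
  | 0 => (x, y)
  | n+1 => (((agmSeq x y n).1 + (agmSeq x y n).2)/2,
      Real.sqrt ((agmSeq x y n).1 * (agmSeq x y n).2))

noncomputable def AG (x y : ℝ) : ℝ :=
  Filter.limUnder Filter.atTop fun n => (agmSeq x y n).1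

/-!
Gauss's argument. With `I(a, b) = ∫₀^{π/2} dθ / √(a² cos² θ + b² sin² θ)` we have
`K(r) = I(1, √(1 - r²))`. The substitution `t = b tan θ` turns `I(a, b)` into
`J(a, b) = ∫₀^∞ dt / √((t² + a²)(t² + b²))`, and Landen's substitution `u = (t - ab/t)/2`, a
bijection of `(0, ∞)` onto `ℝ`, together with the evenness of the integrand in `u`, gives
`J((a + b)/2, √(ab)) = J(a, b)`. So `I` is constant along the AGM iteration, while
`π/(2a) ≤ I(a, b) ≤ π/(2b)` for `b ≤ a`; both bounds tend to `π/(2 AG)`.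
-/

open Real MeasureTheory Set Filter Topology

noncomputable def ellI (a b : ℝ) : ℝ :=
  ∫ θ in (0:ℝ)..π / 2, (√(a ^ 2 * cos θ ^ 2 + b ^ 2 * sin θ ^ 2))⁻¹

noncomputable def ellJ (a b : ℝ) : ℝ :=
  ∫ t in Ioi (0:ℝ), (√((t ^ 2 + a ^ 2) * (t ^ 2 + b ^ 2)))⁻¹

lemma ellK_eq_ellI {r : ℝ} (hr : r ^ 2 ≤ 1) : ellK r = ellI 1 √(1 - r ^ 2) := by
  refine intervalIntegral.integral_congr fun θ _ => ?_
  rw [one_div, sq_sqrt (sub_nonneg.2 hr)]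
  congr 2
  linear_combination -sin_sq_add_cos_sq θ

lemma image_const_mul_tan_Ioo {b : ℝ} (hb : 0 < b) :
    (b * tan ·) '' Ioo 0 (π / 2) = Ioi 0 := by
  ext t
  constructor
  · rintro ⟨θ, ⟨hθ₀, hθ₁⟩, rfl⟩
    exact mul_pos hb (tan_pos_of_pos_of_lt_pi_div_two hθ₀ hθ₁)
  · intro (ht : 0 < t)
    refine ⟨arctan (t / b), ⟨?_, arctan_lt_pi_div_two _⟩, ?_⟩
    · rw [← arctan_zero]
      exact arctan_strictMono (by positivity)
    · simp only [tan_arctan]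
      field_simp

lemma ellI_eq_ellJ (a : ℝ) {b : ℝ} (hb : 0 < b) : ellI a b = ellJ a b := by
  have hcos : ∀ θ ∈ Ioo (0:ℝ) (π / 2), 0 < cos θ := fun θ hθ =>
    cos_pos_of_mem_Ioo ⟨by linarith [hθ.1, pi_pos], hθ.2⟩
  have hinj : InjOn (b * tan ·) (Ioo 0 (π / 2)) := by
    refine StrictMonoOn.injOn fun θ hθ φ hφ hθφ => ?_
    exact mul_lt_mul_of_pos_left (strictMonoOn_tan ⟨by linarith [hθ.1, pi_pos], hθ.2⟩
      ⟨by linarith [hφ.1, pi_pos], hφ.2⟩ hθφ) hb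
  have hderiv : ∀ θ ∈ Ioo (0:ℝ) (π / 2),
      HasDerivWithinAt (b * tan ·) (b / cos θ ^ 2) (Ioo 0 (π / 2)) θ := fun θ hθ => by
    simpa [div_eq_mul_inv] using ((hasDerivAt_tan (hcos θ hθ).ne').const_mul b).hasDerivWithinAt
  rw [ellI, intervalIntegral.integral_of_le (by positivity), integral_Ioc_eq_integral_Ioo, ellJ,
    ← image_const_mul_tan_Ioo hb,
    integral_image_eq_integral_abs_deriv_smul measurableSet_Ioo hderiv hinj]
  refine setIntegral_congr_fun measurableSet_Ioo fun θ hθ => ?_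
  have hc := hcos θ hθ
  have hR : 0 < a ^ 2 * cos θ ^ 2 + b ^ 2 * sin θ ^ 2 := by
    have := sin_pos_of_pos_of_lt_pi hθ.1 (by linarith [hθ.2, pi_pos])
    positivity
  have key : ((b * tan θ) ^ 2 + a ^ 2) * ((b * tan θ) ^ 2 + b ^ 2)
      = (a ^ 2 * cos θ ^ 2 + b ^ 2 * sin θ ^ 2) * (b / cos θ ^ 2) ^ 2 := by
    rw [tan_eq_sin_div_cos]
    field_simp
    linear_combination (b ^ 2 * sin θ ^ 2 + cos θ ^ 2 * a ^ 2) * sin_sq_add_cos_sq θ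
  rw [key, sqrt_mul hR.le, sqrt_sq (by positivity), abs_of_pos (by positivity), smul_eq_mul]
  field_simp

lemma image_half_sub_div_Ioi {c : ℝ} (hc : 0 < c) : (fun t => (t - c / t) / 2) '' Ioi 0 = univ := by
  refine eq_univ_of_forall fun u => ?_
  have habs : |u| < √(u ^ 2 + c) := by
    rw [← sqrt_sq_eq_abs]
    exact sqrt_lt_sqrt (sq_nonneg u) (by linarith)
  have hpos : 0 < u + √(u ^ 2 + c) := by linarith [neg_abs_le u]
  refine ⟨u + √(u ^ 2 + c), hpos, ?_⟩
  have hs : √(u ^ 2 + c) ^ 2 = u ^ 2 + c := sq_sqrt (by positivity)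
  field_simp
  linear_combination hs

lemma strictMonoOn_half_sub_div {c : ℝ} (hc : 0 ≤ c) :
    StrictMonoOn (fun t => (t - c / t) / 2) (Ioi 0) := fun s (hs : 0 < s) t _ hst => by
  have : c / t ≤ c / s := div_le_div_of_nonneg_left hc hs hst.le
  dsimp only
  linarith

lemma ellJ_agm_step {a b : ℝ} (ha : 0 < a) (hb : 0 < b) :
    ellJ ((a + b) / 2) √(a * b) = ellJ a b := by
  set c := a * b
  have hc : 0 < c := mul_pos ha hb
  set G : ℝ → ℝ := fun u => (√((u ^ 2 + ((a + b) / 2) ^ 2) * (u ^ 2 + √c ^ 2)))⁻¹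
  have hderiv : ∀ t ∈ Ioi (0:ℝ),
      HasDerivWithinAt (fun t => (t - c / t) / 2) ((1 + c / t ^ 2) / 2) (Ioi 0) t := by
    intro t (ht : 0 < t)
    have h : HasDerivAt (fun t => (t - c / t) / 2) ((1 - (0 * t - c * 1) / t ^ 2) / 2) t :=
      ((hasDerivAt_id' t).sub ((hasDerivAt_const t c).div (hasDerivAt_id' t) ht.ne')).div_const 2
    exact (h.congr_deriv (by ring)).hasDerivWithinAt
  have hsubst : ∀ t ∈ Ioi (0:ℝ), |(1 + c / t ^ 2) / 2| • G ((t - c / t) / 2)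
      = 2 * (√((t ^ 2 + a ^ 2) * (t ^ 2 + b ^ 2)))⁻¹ := by
    intro t (ht : 0 < t)
    have hR : 0 < (t ^ 2 + a ^ 2) * (t ^ 2 + b ^ 2) := by positivity
    -- `u² + ((a + b)/2)² = (t² + a²)(t² + b²)/(4t²)` and `u² + ab = ((t² + ab)/(2t))²`
    have key : (((t - c / t) / 2) ^ 2 + ((a + b) / 2) ^ 2) * (((t - c / t) / 2) ^ 2 + √c ^ 2)
        = ((t ^ 2 + a ^ 2) * (t ^ 2 + b ^ 2)) * ((t ^ 2 + c) / (4 * t ^ 2)) ^ 2 := by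
      rw [sq_sqrt hc.le]
      field_simp
      ring
    simp only [G, key, sqrt_mul hR.le, sqrt_sq (by positivity : 0 ≤ (t ^ 2 + c) / (4 * t ^ 2)),
      abs_of_pos (by positivity : 0 < (1 + c / t ^ 2) / 2), smul_eq_mul]
    field_simp
    norm_num
  have hdouble : 2 * ellJ ((a + b) / 2) √c = 2 * ellJ a b :=
    calc 2 * ellJ ((a + b) / 2) √c = ∫ u, G |u| := integral_comp_abs.symm
      _ = ∫ u in (fun t => (t - c / t) / 2) '' Ioi 0, G u := by
        simp only [image_half_sub_div_Ioi hc, setIntegral_univ, G, sq_abs]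
      _ = ∫ t in Ioi 0, 2 * (√((t ^ 2 + a ^ 2) * (t ^ 2 + b ^ 2)))⁻¹ := by
        rw [integral_image_eq_integral_abs_deriv_smul measurableSet_Ioi hderiv
          (strictMonoOn_half_sub_div hc.le).injOn]
        exact setIntegral_congr_fun measurableSet_Ioi hsubst
      _ = 2 * ellJ a b := integral_const_mul 2 _
  linarith

lemma ellI_agm_step {a b : ℝ} (ha : 0 < a) (hb : 0 < b) :
    ellI ((a + b) / 2) √(a * b) = ellI a b := by
  rw [ellI_eq_ellJ _ (by positivity), ellJ_agm_step ha hb, ellI_eq_ellJ _ hb]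

lemma sqrt_radicand_mem_Icc {a b : ℝ} (hb : 0 < b) (hba : b ≤ a) (θ : ℝ) :
    √(a ^ 2 * cos θ ^ 2 + b ^ 2 * sin θ ^ 2) ∈ Icc b a := by
  have hsc := sin_sq_add_cos_sq θ
  have hab : 0 ≤ a ^ 2 - b ^ 2 := sub_nonneg.2 (pow_le_pow_left₀ hb.le hba 2)
  exact ⟨(le_sqrt' hb).2 (by nlinarith [mul_nonneg hab (sq_nonneg (cos θ))]),
    (sqrt_le_left (hb.le.trans hba)).2 (by nlinarith [mul_nonneg hab (sq_nonneg (sin θ))])⟩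

lemma ellI_mem_Icc {a b : ℝ} (hb : 0 < b) (hba : b ≤ a) :
    ellI a b ∈ Icc (π / (2 * a)) (π / (2 * b)) := by
  have hbound := sqrt_radicand_mem_Icc hb hba
  have hpos θ := hb.trans_le (hbound θ).1
  have hint : IntervalIntegrable (fun θ => (√(a ^ 2 * cos θ ^ 2 + b ^ 2 * sin θ ^ 2))⁻¹)
      volume 0 (π / 2) :=
    ((by fun_prop : Continuous fun θ => √(a ^ 2 * cos θ ^ 2 + b ^ 2 * sin θ ^ 2)).inv₀
      fun θ => (hpos θ).ne').intervalIntegrable _ _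
  have hpi : 0 ≤ π / 2 := by positivity
  constructor
  · calc π / (2 * a) = ∫ _ in (0:ℝ)..π / 2, a⁻¹ := by simp; ring
      _ ≤ ellI a b := intervalIntegral.integral_mono_on hpi (by simp) hint
          fun θ _ => inv_anti₀ (hpos θ) (hbound θ).2
  · calc ellI a b ≤ ∫ _ in (0:ℝ)..π / 2, b⁻¹ := intervalIntegral.integral_mono_on hpi hint
          (by simp) fun θ _ => inv_anti₀ hb (hbound θ).1
      _ = π / (2 * b) := by simp; ring

section AGM

variable {x y : ℝ}

lemma agmSeq_pos (hx : 0 < x) (hy : 0 < y) (n : ℕ) :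
    0 < (agmSeq x y n).1 ∧ 0 < (agmSeq x y n).2 := by
  induction n with
  | zero => exact ⟨hx, hy⟩
  | succ n ih =>
    obtain ⟨ha, hb⟩ := ih
    exact ⟨by simp only [agmSeq]; positivity, by simp only [agmSeq]; positivity⟩

lemma agmSeq_snd_le_fst (hy : 0 < y) (hxy : y ≤ x) (n : ℕ) :
    (agmSeq x y n).2 ≤ (agmSeq x y n).1 := by
  cases n with
  | zero => exact hxy
  | succ n =>
    obtain ⟨ha, hb⟩ := agmSeq_pos (hy.trans_le hxy) hy n
    simp only [agmSeq]
    exact (sqrt_le_left (by positivity)).2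
      (by nlinarith [sq_nonneg ((agmSeq x y n).1 - (agmSeq x y n).2)])

lemma agmSeq_fst_antitone (hy : 0 < y) (hxy : y ≤ x) :
    Antitone fun n => (agmSeq x y n).1 :=
  antitone_nat_of_succ_le fun n => by
    simp only [agmSeq]
    linarith [agmSeq_snd_le_fst hy hxy n]

lemma agmSeq_snd_monotone (hy : 0 < y) (hxy : y ≤ x) :
    Monotone fun n => (agmSeq x y n).2 :=
  monotone_nat_of_le_succ fun n => by
    obtain ⟨ha, hb⟩ := agmSeq_pos (hy.trans_le hxy) hy n
    simp only [agmSeq]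
    exact (le_sqrt' hb).2 (by nlinarith [agmSeq_snd_le_fst hy hxy n])

lemma agmSeq_fst_sub_snd_le (hy : 0 < y) (hxy : y ≤ x) (n : ℕ) :
    (agmSeq x y n).1 - (agmSeq x y n).2 ≤ (x - y) / 2 ^ n := by
  induction n with
  | zero => simp [agmSeq]
  | succ n ih =>
    have := agmSeq_snd_monotone hy hxy n.le_succ
    simp only [agmSeq, pow_succ] at this ⊢
    rw [← div_div]
    linarith

lemma tendsto_agmSeq_fst (hy : 0 < y) (hxy : y ≤ x) :
    Tendsto (fun n => (agmSeq x y n).1) atTop (𝓝 (AG x y)) := by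
  refine tendsto_nhds_limUnder ⟨_, tendsto_atTop_ciInf (agmSeq_fst_antitone hy hxy) ⟨0, ?_⟩⟩
  rintro _ ⟨n, rfl⟩
  exact (agmSeq_pos (hy.trans_le hxy) hy n).1.le

lemma tendsto_agmSeq_snd (hy : 0 < y) (hxy : y ≤ x) :
    Tendsto (fun n => (agmSeq x y n).2) atTop (𝓝 (AG x y)) := by
  have hgap : Tendsto (fun n => (agmSeq x y n).1 - (agmSeq x y n).2) atTop (𝓝 0) := by
    refine squeeze_zero (fun n => sub_nonneg.2 (agmSeq_snd_le_fst hy hxy n))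
      (agmSeq_fst_sub_snd_le hy hxy)
      (tendsto_const_nhds.div_atTop (tendsto_pow_atTop_atTop_of_one_lt one_lt_two))
  simpa using (tendsto_agmSeq_fst hy hxy).sub hgap

lemma le_AG (hy : 0 < y) (hxy : y ≤ x) : y ≤ AG x y :=
  (agmSeq_snd_monotone hy hxy).ge_of_tendsto (tendsto_agmSeq_snd hy hxy) 0

lemma ellI_agmSeq (hx : 0 < x) (hy : 0 < y) (n : ℕ) :
    ellI (agmSeq x y n).1 (agmSeq x y n).2 = ellI x y := by
  induction n with
  | zero => rfl
  | succ n ih =>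
    obtain ⟨ha, hb⟩ := agmSeq_pos hx hy n
    rw [← ih, ← ellI_agm_step ha hb]
    rfl

lemma ellI_eq_pi_div_two_mul_AG (hy : 0 < y) (hxy : y ≤ x) :
    ellI x y = π / (2 * AG x y) := by
  have hAG : 0 < AG x y := hy.trans_le (le_AG hy hxy)
  have hbounds n : ellI x y ∈ Icc (π / (2 * (agmSeq x y n).1)) (π / (2 * (agmSeq x y n).2)) := by
    rw [← ellI_agmSeq (hy.trans_le hxy) hy n]
    exact ellI_mem_Icc (agmSeq_pos (hy.trans_le hxy) hy n).2 (agmSeq_snd_le_fst hy hxy n)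
  have hlim {u : ℕ → ℝ} (hu : Tendsto u atTop (𝓝 (AG x y))) :
      Tendsto (fun n => π / (2 * u n)) atTop (𝓝 (π / (2 * AG x y))) :=
    tendsto_const_nhds.div (tendsto_const_nhds.mul hu) (by positivity)
  exact le_antisymm
    (ge_of_tendsto (hlim (tendsto_agmSeq_snd hy hxy)) (.of_forall fun n => (hbounds n).2))
    (le_of_tendsto (hlim (tendsto_agmSeq_fst hy hxy)) (.of_forall fun n => (hbounds n).1))

end AGM

theorem ellK_eq_agm (r : ℝ) (hr : r ∈ Set.Ioo (0:ℝ) 1) :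
    ellK r = Real.pi / (2 * AG 1 (Real.sqrt (1 - r^2))) := by
  have hr2 : r ^ 2 < 1 := by nlinarith [hr.1, hr.2]
  rw [ellK_eq_ellI hr2.le]
  exact ellI_eq_pi_div_two_mul_AG (sqrt_pos.2 (by linarith)) (sqrt_le_one.2 (by nlinarith))
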